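/- Regular hunting of predators destabilizes the Lotka–Volterra system: for b_x = 0 and any b_y < 0, the point (X*, Y*) = (1 − b_y, 1) is a stationary point of the open Lotka–Volterra system with X* > 0, Y* > 0, and the Jacobian matrix J = [[1 − Y*, −X*], [Y*, X* − 1]] has an eigenvalue with positive real part. -/

import Mathlib

/-! The trace of the Jacobian is `X* − Y* = −b_y > 0`, and the trace is the sum of the
eigenvalues, so some eigenvalue has positive real part. -/

open Polynomial

theorem Matrix.exists_mem_spectrum_re_pos_of_trace_re_pos
    {n : Type*} [Fintype n] [DecidableEq n] (A : Matrix n n ℂ) (h : 0 < A.trace.re) :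
    ∃ μ ∈ spectrum ℂ A, 0 < μ.re := by
  by_contra! hle
  have : A.trace.re ≤ 0 := by
    rw [trace_eq_sum_roots_charpoly, ← Complex.coe_reAddGroupHom, map_multiset_sum]
    refine (Multiset.sum_le_card_nsmul _ 0 fun x hx => ?_).trans_eq (nsmul_zero _)
    obtain ⟨μ, hμ, rfl⟩ := Multiset.mem_map.1 hx
    exact hle μ <| mem_spectrum_of_isRoot_charpoly (isRoot_of_mem_roots hμ)
  exact this.not_gt h

/-- Regular hunting of predators (`bx = 0`, `by < 0`) destabilizes the
Lotka–Volterra system: `(1 − by, 1)` is a positive stationary point and the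
Jacobian there has an eigenvalue with positive real part. -/
theorem lv_hunting_predators_destabilizes
    (bx by_ : ℝ) (hbx : bx = 0) (hby : by_ < 0) :
    let Xs : ℝ := 1 - by_
    let Ys : ℝ := 1
    (0 < Xs ∧ 0 < Ys ∧ Xs - Xs * Ys + bx = 0 ∧ Xs * Ys - Ys + by_ = 0) ∧
    ∃ μ ∈ spectrum ℂ ((!![1 - Ys, -Xs; Ys, Xs - 1]).map Complex.ofReal),
      0 < μ.re := by
  intro Xs Ys
  refine ⟨⟨by linarith, one_pos, by simp [Xs, Ys, hbx], by ring⟩, ?_⟩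
  apply Matrix.exists_mem_spectrum_re_pos_of_trace_re_pos
  simpa [Matrix.trace_fin_two, Xs, Ys] using hby
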